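/- Let q be a positive integer and let b_i = binom(i, q) for all positive integers i. Then for all integers n ≥ 2, the identity of integers C^b(n+q+1) = ∑_{i=0}^{q} (-1)^{i+q} binom(q+1, i) · C^b(n+i) + C^b(n+1) holds. -/

import Mathlib

open Finset

/-- The number of generalized compositions of `n` with `k` parts, where the part `i`
comes in `b i` types: the sum over all `k`-tuples of positive integers summing to `n`
of the product of the `b`-values of the parts. -/
def genComp (b : ℕ → ℕ) (n k : ℕ) : ℕ :=
  ∑ f ∈ (Finset.Nat.antidiagonalTuple k n).filter (fun f => ∀ j, 0 < f j),
    ∏ j, b (f j)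

/-- The total number of generalized compositions of `n` (with any number of parts). -/
def genCompAll (b : ℕ → ℕ) (n : ℕ) : ℕ :=
  ∑ k ∈ Finset.range (n + 1), genComp b n k

/-! Let `B = ∑_{i ≥ 1} binom(i, q) X^i = X^q / (1 - X)^(q+1)` and `C = ∑ C^b(n) X^n`.
Splitting off the first part of a composition gives `C = 1 + B C`, hence
`(1 - X)^(q+1) C = (1 - X)^(q+1) + X^q C`. For `n ≥ 1` the polynomial `(1 - X)^(q+1)` has no
coefficient at `X^(n+q+1)`, and comparing the remaining coefficients there is the recurrence. -/

open PowerSeries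

section Compositions
variable (b : ℕ → ℕ)

theorem genComp_zero_right (n : ℕ) : genComp b n 0 = if n = 0 then 1 else 0 := by
  cases n <;> simp [genComp, Nat.antidiagonalTuple_zero_zero, Nat.antidiagonalTuple_zero_succ]

theorem genComp_eq_zero_of_lt {n k : ℕ} (h : n < k) : genComp b n k = 0 := by
  refine sum_eq_zero fun f hf => absurd h (not_lt.2 ?_)
  simp only [mem_filter, Nat.mem_antidiagonalTuple] at hf
  calc k = ∑ _j : Fin k, 1 := by simp
    _ ≤ ∑ j, f j := sum_le_sum fun j _ => hf.2 j
    _ = n := hf.1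

theorem genComp_succ (n k : ℕ) :
    genComp b n (k + 1) = ∑ i ∈ Icc 1 n, b i * genComp b (n - i) k := by
  simp_rw [genComp, mul_sum, sum_sigma']
  refine sum_nbij' (fun f => ⟨f 0, Fin.tail f⟩) (fun p => Fin.cons p.1 p.2) ?_ ?_
    (fun f _ => Fin.cons_self_tail f) (fun p _ => by simp) (fun f _ => Fin.prod_univ_succ _)
  · intro f hf
    simp only [mem_filter, Nat.mem_antidiagonalTuple, Fin.sum_univ_succ] at hf
    simp only [mem_sigma, mem_Icc, mem_filter, Nat.mem_antidiagonalTuple]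
    exact ⟨⟨hf.2 0, by omega⟩, by simp [Fin.tail]; omega, fun j => hf.2 j.succ⟩
  · rintro ⟨i, g⟩ hp
    simp only [mem_sigma, mem_Icc, mem_filter, Nat.mem_antidiagonalTuple] at hp
    simp only [mem_filter, Nat.mem_antidiagonalTuple, Fin.sum_univ_succ, Fin.cons_zero,
      Fin.cons_succ]
    refine ⟨by omega, Fin.cases hp.1.1 fun j => by simpa using hp.2.2 j⟩

theorem genCompAll_zero : genCompAll b 0 = 1 := by
  simp [genCompAll, genComp_zero_right]

theorem genCompAll_eq_sum_range {n N : ℕ} (h : n < N) :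
    genCompAll b n = ∑ k ∈ range N, genComp b n k :=
  sum_subset (range_subset_range.2 h) fun _ _ hk =>
    genComp_eq_zero_of_lt b (by simpa using hk)

theorem genCompAll_eq_sum {n : ℕ} (hn : n ≠ 0) :
    genCompAll b n = ∑ i ∈ Icc 1 n, b i * genCompAll b (n - i) := by
  rw [genCompAll, sum_range_succ', genComp_zero_right, if_neg hn, add_zero]
  simp_rw [genComp_succ, sum_comm (s := range n), ← mul_sum]
  exact sum_congr rfl fun i hi => by
    rw [genCompAll_eq_sum_range b (N := n) (by have := mem_Icc.1 hi; omega)]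

end Compositions

section Binomial
variable {R : Type*} [CommRing R]

theorem coeff_add_one_sub_X_pow_mul (n d : ℕ) (F : R⟦X⟧) :
    coeff (n + d) ((1 - X) ^ d * F) =
      ∑ i ∈ range (d + 1), (-1) ^ (i + d) * (d.choose i : R) * coeff (n + i) F := by
  rw [sub_pow, sum_mul, map_sum]
  refine sum_congr rfl fun i hi => ?_
  have hid : d - i + (n + i) = n + d := by have := mem_range.1 hi; omega
  rw [show (-1) ^ (i + d) * 1 ^ i * X ^ (d - i) * (d.choose i : R⟦X⟧) * F
      = C ((-1) ^ (i + d) * (d.choose i : R)) * (X ^ (d - i) * F) by simp; ring,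
    coeff_C_mul, ← hid, coeff_X_pow_mul', if_pos (Nat.le_add_right _ _), Nat.add_sub_cancel_left]

theorem mk_choose_eq_X_pow_mul (q : ℕ) :
    (PowerSeries.mk fun i => (i.choose q : R)) =
      X ^ q * PowerSeries.mk fun i => ((q + i).choose q : R) := by
  ext i
  rw [coeff_X_pow_mul', coeff_mk]
  split_ifs with h
  · rw [coeff_mk, Nat.add_sub_cancel' h]
  · rw [Nat.choose_eq_zero_of_lt (not_le.1 h), Nat.cast_zero]

theorem one_sub_X_pow_mul_mk_choose (q : ℕ) :
    (1 - X) ^ (q + 1) * (PowerSeries.mk fun i => (i.choose q : R)) = X ^ q := by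
  rw [mk_choose_eq_X_pow_mul, mul_left_comm, mul_comm ((1 - X : R⟦X⟧) ^ (q + 1)),
    mk_add_choose_mul_one_sub_pow_eq_one, mul_one]

end Binomial

section GeneratingFunction
variable (R : Type*) (b : ℕ → ℕ)

noncomputable def weightSeries [Semiring R] : R⟦X⟧ :=
  PowerSeries.mk fun i => if i = 0 then 0 else (b i : R)

noncomputable def genCompSeries [Semiring R] : R⟦X⟧ :=
  PowerSeries.mk fun n => (genCompAll b n : R)

theorem genCompSeries_eq_one_add_weightSeries_mul [CommSemiring R] :
    genCompSeries R b = 1 + weightSeries R b * genCompSeries R b := by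
  ext n
  rw [map_add, coeff_one, coeff_mul, Nat.sum_antidiagonal_eq_sum_range_succ_mk]
  simp only [genCompSeries, weightSeries, coeff_mk]
  rcases eq_or_ne n 0 with rfl | hn
  · simp [genCompAll_zero]
  rw [genCompAll_eq_sum b hn, if_neg hn, zero_add, Nat.cast_sum]
  refine sum_subset_zero_on_sdiff (fun i hi => by simp at hi ⊢; omega) (fun i hi => ?_) ?_
  · obtain rfl : i = 0 := by simp at hi; omega
    simp
  · intro i hi
    rw [if_neg (by simp at hi; omega), Nat.cast_mul]

end GeneratingFunction

theorem one_sub_X_pow_mul_genCompSeries {R : Type*} [CommRing R] {q : ℕ} (hq : q ≠ 0)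
    {b : ℕ → ℕ} (hb : ∀ i, 1 ≤ i → b i = i.choose q) :
    (1 - X) ^ (q + 1) * genCompSeries R b = (1 - X) ^ (q + 1) + X ^ q * genCompSeries R b := by
  have hW : weightSeries R b = PowerSeries.mk fun i => (i.choose q : R) := by
    ext i
    rcases eq_or_ne i 0 with rfl | hi
    · simp [weightSeries, Nat.choose_eq_zero_of_lt (Nat.pos_of_ne_zero hq)]
    · simp [weightSeries, hi, hb i (Nat.one_le_iff_ne_zero.2 hi)]
  conv_lhs => rw [genCompSeries_eq_one_add_weightSeries_mul]
  rw [mul_add, mul_one, ← mul_assoc, hW, one_sub_X_pow_mul_mk_choose]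

theorem sum_neg_one_pow_mul_choose_mul_genCompAll {q : ℕ} (hq : q ≠ 0) {b : ℕ → ℕ}
    (hb : ∀ i, 1 ≤ i → b i = i.choose q) {n : ℕ} (hn : n ≠ 0) :
    ∑ i ∈ range (q + 2),
        (-1 : ℤ) ^ (i + (q + 1)) * ((q + 1).choose i : ℤ) * genCompAll b (n + i) =
      genCompAll b (n + 1) := by
  have hD : coeff (n + (q + 1)) ((1 - X : ℤ⟦X⟧) ^ (q + 1)) = 0 := by
    simpa [coeff_one, hn] using coeff_add_one_sub_X_pow_mul n (q + 1) (1 : ℤ⟦X⟧)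
  have h := congrArg (coeff (n + (q + 1))) (one_sub_X_pow_mul_genCompSeries (R := ℤ) hq hb)
  rw [map_add, coeff_add_one_sub_X_pow_mul, hD, zero_add, coeff_X_pow_mul', if_pos (by omega),
    show n + (q + 1) - q = n + 1 by omega] at h
  simpa [genCompSeries] using h

theorem genCompAll_explicit_recurrence (q : ℕ) (hq : 1 ≤ q) (b : ℕ → ℕ)
    (hb : ∀ i, 1 ≤ i → b i = Nat.choose i q) (n : ℕ) (hn : 2 ≤ n) :
    (genCompAll b (n + q + 1) : ℤ) =
      (∑ i ∈ Finset.range (q + 1),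
        (-1 : ℤ) ^ (i + q) * Nat.choose (q + 1) i * (genCompAll b (n + i) : ℤ)) +
      (genCompAll b (n + 1) : ℤ) := by
  have key := sum_neg_one_pow_mul_choose_mul_genCompAll (by omega) hb (n := n) (by omega)
  have hsign (i : ℕ) : (-1 : ℤ) ^ (i + (q + 1)) = -(-1) ^ (i + q) := by
    rw [← add_assoc, pow_succ, mul_neg_one]
  rw [sum_range_succ, Even.neg_one_pow ⟨q + 1, rfl⟩, Nat.choose_self, ← add_assoc] at key
  simp_rw [hsign, neg_mul, sum_neg_distrib, Nat.cast_one, one_mul] at key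
  linarith
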